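/- arXiv:2305.13811 — 6 statements merged into one kernel-verified Lean document; each statement's English description precedes it below -/
import Mathlib

section
/- Let A be a commutative ring equipped with a ℂ-algebra structure, let I and J be ideals of A, let Λ, g ∈ A, let h_1,…,h_k and m_1,…,m_r be elements of A, and let q ≥ 1 be an integer. Assume: (i) every element of A lies in the ℂ-linear span of {h_i·m_j : 1 ≤ i ≤ k, 1 ≤ j ≤ r} plus I + (Λ) + J; (ii) for every j ∈ {1,…,r} and every integer l with 0 ≤ l < q, the element m_j·g^l lies in the ℂ-linear span of {m_1,…,m_r} plus J; (iii) g^q ∈ I + (Λ − g) + J. Then every element of A lies in the ℂ-linear span of {h_i·m_j : 1 ≤ i ≤ k, 1 ≤ j ≤ r} plus I + (Λ − g) + J; consequently the quotient A/(I + (Λ − g) + J) is spanned over ℂ by the classes of the products h_i·m_j, and its dimension as a ℂ-vector space is at most k·r. -/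
/-!
Modulo `K = I + (Λ - g) + J` one has `Λ ≡ g`, so hypothesis (i) says `A/K = M + g·(A/K)`, where
`M` is the ℂ-span of the classes of the products `h i * m j`; (ii) gives `g^l M ⊆ M` for `l < q`
and (iii) gives `g^q = 0` in `A/K`. Substituting the decomposition into itself `q` times yields
`A/K = M + gM + ⋯ + g^(q-1)M + g^q(A/K) = M`, and the rank bound follows since `M` is spanned by
`k * r` vectors.
-/

open Submodule Set

section PowerDescent

variable {R Q : Type*} [Semiring R] [Semiring Q] [Module R Q] {M : Submodule R Q} {t : Q} {q : ℕ}

theorem Submodule.exists_mem_add_pow_mul (hM : ∀ x : Q, ∃ y ∈ M, ∃ z, x = y + t * z)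
    (hpow : ∀ l < q, ∀ y ∈ M, t ^ l * y ∈ M) {n : ℕ} (hn : n ≤ q) (x : Q) :
    ∃ y ∈ M, ∃ z, x = y + t ^ n * z := by
  induction n with
  | zero => exact ⟨0, M.zero_mem, x, by simp⟩
  | succ n ih =>
    obtain ⟨y, hy, z, rfl⟩ := ih (by omega)
    obtain ⟨y', hy', z', rfl⟩ := hM z
    refine ⟨y + t ^ n * y', M.add_mem hy (hpow n (by omega) y' hy'), z', ?_⟩
    rw [mul_add, pow_succ, mul_assoc, add_assoc]

theorem Submodule.eq_top_of_forall_eq_add_mul_of_pow_eq_zero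
    (hM : ∀ x : Q, ∃ y ∈ M, ∃ z, x = y + t * z) (hpow : ∀ l < q, ∀ y ∈ M, t ^ l * y ∈ M)
    (hnil : t ^ q = 0) : M = ⊤ := by
  refine eq_top_iff'.mpr fun x => ?_
  obtain ⟨y, hy, z, rfl⟩ := exists_mem_add_pow_mul hM hpow le_rfl x
  simpa [hnil] using hy

end PowerDescent

theorem Submodule.mul_mem_span_range_mul {R A ι κ : Type*} [CommSemiring R] [CommSemiring A]
    [Algebra R A] (h : ι → A) (m : κ → A) {c : A} (hc : ∀ j, c * m j ∈ span R (range m)) {x : A}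
    (hx : x ∈ span R (range fun ij : ι × κ => h ij.1 * m ij.2)) :
    c * x ∈ span R (range fun ij : ι × κ => h ij.1 * m ij.2) := by
  induction hx using Submodule.span_induction with
  | mem _ hx =>
    obtain ⟨⟨i, j⟩, rfl⟩ := hx
    have hij := mem_map_of_mem (f := LinearMap.mulLeft R (h i)) (hc j)
    rw [map_span, ← range_comp] at hij
    rw [mul_left_comm]
    refine span_mono ?_ hij
    rintro _ ⟨j', rfl⟩
    exact ⟨(i, j'), rfl⟩
  | zero => simp
  | add _ _ _ _ hx hy => rw [mul_add]; exact add_mem hx hy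
  | smul a _ _ hx => rw [mul_smul_comm]; exact smul_mem _ a hx

theorem rank_le_card_of_span_range_eq_top {R M ι : Type*} [Ring R] [StrongRankCondition R]
    [AddCommGroup M] [Module R M] [Fintype ι] {v : ι → M} (hv : span R (range v) = ⊤) :
    Module.rank R M ≤ Fintype.card ι := by
  rw [← rank_top, ← hv]
  refine (rank_span_le _).trans ?_
  simpa using Cardinal.mk_range_le_lift (f := v)

namespace Ideal.Quotient

variable {R A : Type*} [CommSemiring R] [CommRing A] [Algebra R A] (K : Ideal A)

theorem ker_mkₐ_toLinearMap : LinearMap.ker (mkₐ R K).toLinearMap = K.restrictScalars R := by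
  ext
  simp [eq_zero_iff_mem]

theorem comap_map_mkₐ (S : Submodule R A) :
    (S.map (mkₐ R K).toLinearMap).comap (mkₐ R K).toLinearMap = S ⊔ K.restrictScalars R := by
  rw [comap_map_eq, ker_mkₐ_toLinearMap]

theorem map_mkₐ_span_range {ι : Type*} (v : ι → A) :
    (Submodule.span R (range v)).map (mkₐ R K).toLinearMap =
      Submodule.span R (range fun i => mk K (v i)) := by
  rw [Submodule.map_span, ← range_comp]
  rfl

theorem map_mk_add_span_singleton_add {I J : Ideal A} {Λ g : A} (hI : I ≤ K) (hJ : J ≤ K)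
    (hΛg : Λ - g ∈ K) : (I + Ideal.span {Λ} + J).map (mk K) = Ideal.span {mk K g} := by
  have hΛ : mk K Λ = mk K g := Quotient.eq.mpr hΛg
  simp only [add_eq_sup, map_sup, map_span, image_singleton, hΛ, map_mk_eq_bot_of_le hI,
    map_mk_eq_bot_of_le hJ, bot_sup_eq, sup_bot_eq]

theorem span_range_mk_mul_eq_top {ι κ : Type*} {I J : Ideal A} {Λ g : A} {q : ℕ}
    {h : ι → A} {m : κ → A} (hIK : I ≤ K) (hJK : J ≤ K) (hΛg : Λ - g ∈ K) (hgq : g ^ q ∈ K)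
    (hspan : ∀ a : A, a ∈ Submodule.span R (range fun ij : ι × κ => h ij.1 * m ij.2)
      ⊔ (I + Ideal.span {Λ} + J).restrictScalars R)
    (hmul : ∀ j, ∀ l < q, m j * g ^ l ∈ Submodule.span R (range m) ⊔ J.restrictScalars R) :
    Submodule.span R (range fun ij : ι × κ => mk K (h ij.1 * m ij.2)) = ⊤ := by
  simp only [map_mul]
  refine eq_top_of_forall_eq_add_mul_of_pow_eq_zero (t := mk K g) (q := q) ?_ ?_ ?_
  · intro x
    obtain ⟨a, rfl⟩ := mk_surjective x
    obtain ⟨s, hs, u, hu, rfl⟩ := mem_sup.mp (hspan a)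
    obtain ⟨z, hz⟩ := Ideal.mem_span_singleton'.mp <|
      map_mk_add_span_singleton_add K hIK hJK hΛg ▸ Ideal.mem_map_of_mem (mk K) hu
    have hs' := Submodule.mem_map_of_mem (f := (mkₐ R K).toLinearMap) hs
    simp only [map_mkₐ_span_range, map_mul] at hs'
    exact ⟨mk K s, hs', z, by rw [mul_comm, hz, map_add]⟩
  · intro l hl y hy
    refine mul_mem_span_range_mul (fun i => mk K (h i)) (fun j => mk K (m j)) (fun j => ?_) hy
    have hmem : m j * g ^ l ∈ ((Submodule.span R (range m)).map (mkₐ R K).toLinearMap).comap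
        (mkₐ R K).toLinearMap := by
      rw [comap_map_mkₐ]
      exact sup_le_sup_left ((restrictScalars_le R).mpr hJK) _ (hmul j l hl)
    rw [map_mkₐ_span_range] at hmem
    simpa [mul_comm] using hmem
  · rw [← map_pow]
    exact eq_zero_iff_mem.mpr hgq

end Ideal.Quotient

theorem augmentation_codim_upper_bound_core_general
    (A : Type*) [CommRing A] [Algebra ℂ A]
    (I J : Ideal A) (Λ g : A)
    (k r q : ℕ)
    (h : Fin k → A) (m : Fin r → A)
    (h1 : ∀ a : A, a ∈ Submodule.span ℂ (Set.range fun ij : Fin k × Fin r => h ij.1 * m ij.2)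
            ⊔ Submodule.restrictScalars ℂ (I + Ideal.span {Λ} + J))
    (h2 : ∀ (j : Fin r) (l : ℕ), l < q →
      m j * g ^ l ∈ Submodule.span ℂ (Set.range m) ⊔ Submodule.restrictScalars ℂ J)
    (h3 : g ^ q ∈ I + Ideal.span {Λ - g} + J) :
    (∀ a : A, a ∈ Submodule.span ℂ (Set.range fun ij : Fin k × Fin r => h ij.1 * m ij.2)
        ⊔ Submodule.restrictScalars ℂ (I + Ideal.span {Λ - g} + J)) ∧
    (⊤ : Submodule ℂ (A ⧸ (I + Ideal.span {Λ - g} + J))) =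
      Submodule.span ℂ (Set.range fun ij : Fin k × Fin r =>
        Ideal.Quotient.mk (I + Ideal.span {Λ - g} + J) (h ij.1 * m ij.2)) ∧
    Module.rank ℂ (A ⧸ (I + Ideal.span {Λ - g} + J)) ≤ ((k * r : ℕ) : Cardinal) := by
  have htop := Ideal.Quotient.span_range_mk_mul_eq_top (R := ℂ) (I + Ideal.span {Λ - g} + J)
    (le_sup_left.trans le_sup_left) le_sup_right
    (Ideal.mem_sup_left (Ideal.mem_sup_right (Ideal.mem_span_singleton_self _))) h3 h1 h2
  refine ⟨fun a => ?_, htop.symm, (rank_le_card_of_span_range_eq_top htop).trans_eq (by simp)⟩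
  rw [← Ideal.Quotient.comap_map_mkₐ, Ideal.Quotient.map_mkₐ_span_range, htop]
  trivial

/-- The algebraic core of Theorem 3.4 (upper bound
`A_e-codim(A_{F,g}(f)) ≤ A_e-codim(f)·μ(g)`): if a commutative ℂ-algebra `A` is
spanned by the products `h i * m j` together with `I + (Λ) + J`, the `m j * g^l`
(for `l < q`) lie in the ℂ-span of the `m j` plus `J`, and `g^q ∈ I + (Λ - g) + J`,
then `A` is spanned by the products `h i * m j` together with `I + (Λ - g) + J`;
consequently the quotient `A ⧸ (I + (Λ - g) + J)` is spanned over ℂ by the classes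
of the products, and its ℂ-dimension is at most `k * r`. -/
theorem augmentation_codim_upper_bound_core
    (A : Type*) [CommRing A] [Algebra ℂ A]
    (I J : Ideal A) (Λ g : A)
    (k r q : ℕ) (hq : 1 ≤ q)
    (h : Fin k → A) (m : Fin r → A)
    (h1 : ∀ a : A, a ∈ Submodule.span ℂ (Set.range fun ij : Fin k × Fin r => h ij.1 * m ij.2)
            ⊔ Submodule.restrictScalars ℂ (I + Ideal.span {Λ} + J))
    (h2 : ∀ (j : Fin r) (l : ℕ), l < q →
      m j * g ^ l ∈ Submodule.span ℂ (Set.range m) ⊔ Submodule.restrictScalars ℂ J)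
    (h3 : g ^ q ∈ I + Ideal.span {Λ - g} + J) :
    (∀ a : A, a ∈ Submodule.span ℂ (Set.range fun ij : Fin k × Fin r => h ij.1 * m ij.2)
        ⊔ Submodule.restrictScalars ℂ (I + Ideal.span {Λ - g} + J)) ∧
    (⊤ : Submodule ℂ (A ⧸ (I + Ideal.span {Λ - g} + J))) =
      Submodule.span ℂ (Set.range fun ij : Fin k × Fin r =>
        Ideal.Quotient.mk (I + Ideal.span {Λ - g} + J) (h ij.1 * m ij.2)) ∧
    Module.rank ℂ (A ⧸ (I + Ideal.span {Λ - g} + J)) ≤ ((k * r : ℕ) : Cardinal) :=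
  augmentation_codim_upper_bound_core_general A I J Λ g k r q h m h1 h2 h3
end

section
/- Let F(x,λ) = (f̄(x,λ), λ) and F'(x,λ) = (f̄'(x,λ), λ) be one-parameter unfoldings of map-germs f, f' : (ℂ^n,0) → (ℂ^p,0) respectively, and suppose F and F' are φ-equivalent via germs of biholomorphism h(x,λ) = (h̄(x,λ), l(λ)) of (ℂ^n×ℂ,0), k(X,Λ) = (k̄(X,Λ), l(Λ)) of (ℂ^p×ℂ,0), and l of (ℂ,0), with F' ∘ h = k ∘ F as germs. Then for every function germ g : (ℂ^d,0) → (ℂ,0): the maps Ah(x,z) = (h̄(x,g(z)), z) and Ak(X,z) = (k̄(X,g(z)), z) are germs of biholomorphism of (ℂ^n×ℂ^d,0) and (ℂ^p×ℂ^d,0) respectively, and A_{F',l∘g}(f') ∘ Ah = Ak ∘ A_{F,g}(f) as germs; in particular A_{F,g}(f) is A-equivalent to A_{F',l∘g}(f'). -/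
open Filter Topology

noncomputable section

variable {E F : Type*}

/-- A map-germ at the origin: a holomorphic map defined near `0` sending `0` to `0`. -/
def IsMapGerm [NormedAddCommGroup E] [NormedSpace ℂ E]
    [NormedAddCommGroup F] [NormedSpace ℂ F] (f : E → F) : Prop :=
  AnalyticAt ℂ f 0 ∧ f 0 = 0

/-- A germ of biholomorphism of `(E,0)`: a map-germ whose derivative at `0` is invertible. -/
def IsBiholoGerm [NormedAddCommGroup E] [NormedSpace ℂ E] (h : E → E) : Prop :=
  IsMapGerm h ∧ ∃ e : E ≃L[ℂ] E, fderiv ℂ h 0 = (e : E →L[ℂ] E)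

/-- `A`-equivalence of map-germs. -/
def AEquiv [NormedAddCommGroup E] [NormedSpace ℂ E]
    [NormedAddCommGroup F] [NormedSpace ℂ F] (f f' : E → F) : Prop :=
  ∃ H : E → E, ∃ K : F → F, IsBiholoGerm H ∧ IsBiholoGerm K ∧
    f' ∘ H =ᶠ[𝓝 0] K ∘ f

/-!
Substituting `λ = g z` into `F' ∘ h = k ∘ F` gives the conjugation of the augmentations at
once, because `h` and `k` act on the parameter only through `l`. The real point is that `Ah` is
again biholomorphic: since the `λ`-component of `h` depends on `λ` alone, `dh(0)` maps
`ℂⁿ × 0` into itself, injectively, and `dAh(0)(u, v) = ((dh(0)(u, dg(0) v)).1, v)` is then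
injective.
-/

section Augmentation

open ContinuousLinearMap

variable {A B Z Λ Λ' : Type*}

/-- With `φ = f̄`, `h̄`, `k̄` this is `A_{F,g}(f)`, `Ah`, `Ak` of the paper. -/
def augment (φ : A × Λ → B) (g : Z → Λ) : A × Z → B × Z :=
  fun w => (φ (w.1, g w.2), w.2)

theorem augment_comp_augment {C : Type*} (φ' : B × Λ' → C) (ψ : A × Λ → B) (l : Λ → Λ')
    (g : Z → Λ) :
    augment φ' (l ∘ g) ∘ augment ψ g = augment (fun w => φ' (ψ w, l w.2)) g :=
  rfl

variable [NormedAddCommGroup Z] [NormedSpace ℂ Z] [NormedAddCommGroup Λ] [NormedSpace ℂ Λ]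

theorem IsMapGerm.tendsto_prodMk [TopologicalSpace A] [Zero A] {g : Z → Λ}
    (hg : IsMapGerm g) : Tendsto (fun w : A × Z => (w.1, g w.2)) (𝓝 0) (𝓝 0) := by
  have hc : ContinuousAt (fun w : A × Z => (w.1, g w.2)) 0 :=
    continuousAt_fst.prodMk (hg.1.continuousAt.comp_of_eq continuousAt_snd rfl)
  simpa [ContinuousAt, hg.2, Prod.mk_zero_zero] using hc

theorem Filter.EventuallyEq.augment [TopologicalSpace A] [Zero A] {φ φ' : A × Λ → B}
    (h : φ =ᶠ[𝓝 0] φ') {g : Z → Λ} (hg : IsMapGerm g) : augment φ g =ᶠ[𝓝 0] augment φ' g := by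
  filter_upwards [hg.tendsto_prodMk.eventually h] with w hw
  simp only [_root_.augment, hw]

variable [NormedAddCommGroup A] [NormedSpace ℂ A]

theorem IsMapGerm.augment [NormedAddCommGroup B] [NormedSpace ℂ B] {φ : A × Λ → B}
    (hφ : AnalyticAt ℂ φ 0) (hφ0 : φ 0 = 0) {g : Z → Λ} (hg : IsMapGerm g) :
    IsMapGerm (augment φ g) := by
  refine ⟨(hφ.comp_of_eq (analyticAt_fst.prod (hg.1.comp_of_eq analyticAt_snd rfl)) ?_).prod
    analyticAt_snd, ?_⟩
  all_goals simp [_root_.augment, hg.2, hφ0, Prod.mk_zero_zero]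

theorem HasFDerivAt.augment {φ : A × Λ → A} {φ' : A × Λ →L[ℂ] A} (hφ : HasFDerivAt φ φ' 0)
    {g : Z → Λ} (hg : IsMapGerm g) :
    HasFDerivAt (augment φ g)
      ((φ'.comp ((fst ℂ A Z).prod
        ((fderiv ℂ g 0).comp (snd ℂ A Z)))).prod
        (snd ℂ A Z)) 0 := by
  have hψ : HasFDerivAt (fun w : A × Z => (w.1, g w.2)) ((fst ℂ A Z).prod
      ((fderiv ℂ g 0).comp (snd ℂ A Z))) 0 :=
    hasFDerivAt_fst.prodMk (hg.1.differentiableAt.hasFDerivAt.comp (0 : A × Z) hasFDerivAt_snd)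
  have hψ0 : (fun w : A × Z => (w.1, g w.2)) 0 = 0 := by simp [hg.2, Prod.mk_zero_zero]
  rw [← hψ0] at hφ
  exact (hφ.comp 0 hψ).prodMk hasFDerivAt_snd

theorem isBiholoGerm_of_hasFDerivAt {E : Type*} [NormedAddCommGroup E] [NormedSpace ℂ E]
    [FiniteDimensional ℂ E] {h : E → E} {T : E →L[ℂ] E} (hh : IsMapGerm h)
    (hT : HasFDerivAt h T 0) (hT_inj : Function.Injective T) : IsBiholoGerm h :=
  ⟨hh, (LinearEquiv.ofInjectiveEndo (T : E →ₗ[ℂ] E) hT_inj).toContinuousLinearEquiv,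
    by ext; simp [hT.fderiv]⟩

theorem HasFDerivAt.apply_inl_eq_zero [NormedAddCommGroup Λ'] [NormedSpace ℂ Λ']
    {l : Λ → Λ'} {L : A × Λ →L[ℂ] Λ'} (hL : HasFDerivAt (fun w : A × Λ => l w.2) L 0) (a : A) :
    L (a, 0) = 0 := by
  have hconst := hL.comp (0 : A) (hasFDerivAt_prodMk_left (𝕜 := ℂ) (0 : A) (0 : Λ))
  simpa using congrArg (· a) ((hasFDerivAt_const (l 0) 0).unique hconst).symm

theorem IsBiholoGerm.augment [FiniteDimensional ℂ A] [FiniteDimensional ℂ Z] {φ : A × Λ → A}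
    {l : Λ → Λ} (hh : IsBiholoGerm (fun w : A × Λ => (φ w, l w.2))) {g : Z → Λ}
    (hg : IsMapGerm g) : IsBiholoGerm (augment φ g) := by
  obtain ⟨⟨hh_an, hh0⟩, e, he⟩ := hh
  have hh_deriv : HasFDerivAt (fun w : A × Λ => (φ w, l w.2)) (e : A × Λ →L[ℂ] A × Λ) 0 :=
    he ▸ hh_an.differentiableAt.hasFDerivAt
  have he_inl : ∀ a, (e (a, 0)).2 = 0 := hh_deriv.snd.apply_inl_eq_zero
  refine isBiholoGerm_of_hasFDerivAt
    (.augment (analyticAt_fst.comp hh_an) (congrArg Prod.fst hh0) hg) (hh_deriv.fst.augment hg) ?_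
  refine (injective_iff_map_eq_zero _).2 fun w hw => ?_
  simp only [prod_apply, comp_apply, Prod.mk_eq_zero, coe_fst', coe_snd'] at hw
  obtain ⟨hw1, hw2⟩ := hw
  rw [hw2, map_zero] at hw1
  have he_w : e (w.1, 0) = 0 := Prod.ext hw1 (he_inl w.1)
  simpa [hw2, Prod.ext_iff] using e.map_eq_zero_iff.1 he_w

end Augmentation

theorem phi_equiv_augmentation_conjugation_general (n p d : ℕ)
    (fbar fbar' : (Fin n → ℂ) × ℂ → (Fin p → ℂ))
    (hbar : (Fin n → ℂ) × ℂ → (Fin n → ℂ))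
    (kbar : (Fin p → ℂ) × ℂ → (Fin p → ℂ))
    (l : ℂ → ℂ)
    (hh : IsBiholoGerm (fun w : (Fin n → ℂ) × ℂ => (hbar w, l w.2)))
    (hk : IsBiholoGerm (fun W : (Fin p → ℂ) × ℂ => (kbar W, l W.2)))
    (heq : ((fun w : (Fin n → ℂ) × ℂ => (fbar' w, w.2)) ∘
              (fun w : (Fin n → ℂ) × ℂ => (hbar w, l w.2)))
        =ᶠ[𝓝 0]
          ((fun W : (Fin p → ℂ) × ℂ => (kbar W, l W.2)) ∘
              (fun w : (Fin n → ℂ) × ℂ => (fbar w, w.2))))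
    (g : (Fin d → ℂ) → ℂ) (hg : IsMapGerm g) :
    IsBiholoGerm (fun w : (Fin n → ℂ) × (Fin d → ℂ) => (hbar (w.1, g w.2), w.2)) ∧
    IsBiholoGerm (fun W : (Fin p → ℂ) × (Fin d → ℂ) => (kbar (W.1, g W.2), W.2)) ∧
    ((fun w : (Fin n → ℂ) × (Fin d → ℂ) => (fbar' (w.1, l (g w.2)), w.2)) ∘
        (fun w : (Fin n → ℂ) × (Fin d → ℂ) => (hbar (w.1, g w.2), w.2)))
      =ᶠ[𝓝 0]
    ((fun W : (Fin p → ℂ) × (Fin d → ℂ) => (kbar (W.1, g W.2), W.2)) ∘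
        (fun w : (Fin n → ℂ) × (Fin d → ℂ) => (fbar (w.1, g w.2), w.2))) ∧
    AEquiv
      (fun w : (Fin n → ℂ) × (Fin d → ℂ) => (fbar (w.1, g w.2), w.2))
      (fun w : (Fin n → ℂ) × (Fin d → ℂ) => (fbar' (w.1, l (g w.2)), w.2)) := by
  have hAh : IsBiholoGerm (augment hbar g) := hh.augment hg
  have hAk : IsBiholoGerm (augment kbar g) := hk.augment hg
  have hconj : augment fbar' (l ∘ g) ∘ augment hbar g =ᶠ[𝓝 0] augment kbar g ∘ augment fbar g :=
    calc augment fbar' (l ∘ g) ∘ augment hbar g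
        = augment (fun w => fbar' (hbar w, l w.2)) g := augment_comp_augment fbar' hbar l g
      _ =ᶠ[𝓝 0] augment (fun w => kbar (fbar w, w.2)) g := (heq.fun_comp Prod.fst).augment hg
      _ = augment kbar g ∘ augment fbar g := (augment_comp_augment kbar fbar id g).symm
  exact ⟨hAh, hAk, hconj, _, _, hAh, hAk, hconj⟩

/-- The key step in the proof of Theorem 5.2: if the unfoldings `F(x,λ) = (f̄(x,λ),λ)`
and `F'(x,λ) = (f̄'(x,λ),λ)` are φ-equivalent via `h(x,λ) = (h̄(x,λ), l(λ))`,
`k(X,Λ) = (k̄(X,Λ), l(Λ))` and `l`, then for every function germ `g` the maps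
`Ah(x,z) = (h̄(x,g(z)), z)` and `Ak(X,z) = (k̄(X,g(z)), z)` are germs of biholomorphism
and `A_{F',l∘g}(f') ∘ Ah = Ak ∘ A_{F,g}(f)` as germs; in particular
`A_{F,g}(f)` is `A`-equivalent to `A_{F',l∘g}(f')`. -/
theorem phi_equiv_augmentation_conjugation (n p d : ℕ)
    (f f' : (Fin n → ℂ) → (Fin p → ℂ))
    (fbar fbar' : (Fin n → ℂ) × ℂ → (Fin p → ℂ))
    (hf : IsMapGerm f) (hf' : IsMapGerm f')
    (hF : IsMapGerm (fun w : (Fin n → ℂ) × ℂ => (fbar w, w.2)))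
    (hF' : IsMapGerm (fun w : (Fin n → ℂ) × ℂ => (fbar' w, w.2)))
    (hunf : ∀ᶠ x in 𝓝 (0 : Fin n → ℂ), fbar (x, 0) = f x)
    (hunf' : ∀ᶠ x in 𝓝 (0 : Fin n → ℂ), fbar' (x, 0) = f' x)
    (hbar : (Fin n → ℂ) × ℂ → (Fin n → ℂ))
    (kbar : (Fin p → ℂ) × ℂ → (Fin p → ℂ))
    (l : ℂ → ℂ)
    (hh : IsBiholoGerm (fun w : (Fin n → ℂ) × ℂ => (hbar w, l w.2)))
    (hk : IsBiholoGerm (fun W : (Fin p → ℂ) × ℂ => (kbar W, l W.2)))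
    (hl : IsBiholoGerm l)
    (heq : ((fun w : (Fin n → ℂ) × ℂ => (fbar' w, w.2)) ∘
              (fun w : (Fin n → ℂ) × ℂ => (hbar w, l w.2)))
        =ᶠ[𝓝 0]
          ((fun W : (Fin p → ℂ) × ℂ => (kbar W, l W.2)) ∘
              (fun w : (Fin n → ℂ) × ℂ => (fbar w, w.2))))
    (g : (Fin d → ℂ) → ℂ) (hg : IsMapGerm g) :
    IsBiholoGerm (fun w : (Fin n → ℂ) × (Fin d → ℂ) => (hbar (w.1, g w.2), w.2)) ∧
    IsBiholoGerm (fun W : (Fin p → ℂ) × (Fin d → ℂ) => (kbar (W.1, g W.2), W.2)) ∧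
    ((fun w : (Fin n → ℂ) × (Fin d → ℂ) => (fbar' (w.1, l (g w.2)), w.2)) ∘
        (fun w : (Fin n → ℂ) × (Fin d → ℂ) => (hbar (w.1, g w.2), w.2)))
      =ᶠ[𝓝 0]
    ((fun W : (Fin p → ℂ) × (Fin d → ℂ) => (kbar (W.1, g W.2), W.2)) ∘
        (fun w : (Fin n → ℂ) × (Fin d → ℂ) => (fbar (w.1, g w.2), w.2))) ∧
    AEquiv
      (fun w : (Fin n → ℂ) × (Fin d → ℂ) => (fbar (w.1, g w.2), w.2))
      (fun w : (Fin n → ℂ) × (Fin d → ℂ) => (fbar' (w.1, l (g w.2)), w.2)) :=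
  phi_equiv_augmentation_conjugation_general n p d fbar fbar' hbar kbar l hh hk heq g hg
end
end

section
/- Let F(x,λ) = (f̄(x,λ), λ) and F'(x,λ) = (f̄'(x,λ), λ) be one-parameter unfoldings of map-germs f, f' : (ℂ^n,0) → (ℂ^p,0) respectively, and suppose F and F' are φ-equivalent. Let g : (ℂ^d,0) → (ℂ,0) be a function germ that is R-equivalent to a quasi-homogeneous function germ. Then the augmentations A_{F,g}(f) and A_{F',g}(f') are A-equivalent. -/
/-!
The φ-equivalence provides `h = (h̄, l)` and `k = (k̄, l)` with `F' ∘ h = k ∘ F`. Given a germ of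
biholomorphism `ψ` of `(ℂ^d, 0)` with `g ∘ ψ = l ∘ g`, the germs `H(x, z) = (h̄(x, g z), ψ z)` and
`K(X, z) = (k̄(X, g z), ψ z)` are biholomorphisms (their derivatives are block triangular) and
`A_{F',g}(f') ∘ H = K ∘ A_{F,g}(f)`. Such a `ψ` exists because `g` is quasi-homogeneous up to a
change of coordinates: writing `l(λ) = t(λ)ʷ λ` with `t(0) ≠ 0`, the weighted scaling
`ψ(z) = t(g z) · z` satisfies `g(ψ z) = t(g z)ʷ g(z) = l(g z)`.
-/

open Filter Topology

noncomputable section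

variable {E F : Type*}

/-- A quasi-homogeneous function germ. -/
def QuasiHomogeneous (d : ℕ) (g : (Fin d → ℂ) → ℂ) : Prop :=
  ∃ (w : ℕ) (wi : Fin d → ℕ), 0 < w ∧ (∀ i, 0 < wi i) ∧
    ∀ t : ℂ, ∀ᶠ z in 𝓝 0, g (fun i => t ^ wi i * z i) = t ^ w * g z

/-- φ-equivalence (with φ the projection on the parameter) of the one-parameter
unfoldings determined by `fbar` and `fbar'`. -/
def PhiEquivUnf (n p : ℕ) (fbar fbar' : (Fin n → ℂ) × ℂ → (Fin p → ℂ)) : Prop :=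
  ∃ (hbar : (Fin n → ℂ) × ℂ → (Fin n → ℂ)) (kbar : (Fin p → ℂ) × ℂ → (Fin p → ℂ))
    (l : ℂ → ℂ),
    IsBiholoGerm (fun w : (Fin n → ℂ) × ℂ => (hbar w, l w.2)) ∧
    IsBiholoGerm (fun W : (Fin p → ℂ) × ℂ => (kbar W, l W.2)) ∧
    IsBiholoGerm l ∧
    ((fun w : (Fin n → ℂ) × ℂ => (fbar' w, w.2)) ∘
        (fun w : (Fin n → ℂ) × ℂ => (hbar w, l w.2)))
      =ᶠ[𝓝 0]
    ((fun W : (Fin p → ℂ) × ℂ => (kbar W, l W.2)) ∘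
        (fun w : (Fin n → ℂ) × ℂ => (fbar w, w.2)))

namespace IsMapGerm

variable [NormedAddCommGroup E] [NormedSpace ℂ E] [NormedAddCommGroup F] [NormedSpace ℂ F]

lemma tendsto {f : E → F} (hf : IsMapGerm f) : Tendsto f (𝓝 0) (𝓝 0) := by
  simpa only [ContinuousAt, hf.2] using hf.1.continuousAt

end IsMapGerm

lemma HasFDerivAt.snd_apply_mk_zero [NormedAddCommGroup E] [NormedSpace ℂ E]
    {hbar : E × ℂ → E} {l : ℂ → ℂ} {T : E × ℂ →L[ℂ] E × ℂ} {a : E × ℂ}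
    (hT : HasFDerivAt (fun v : E × ℂ => (hbar v, l v.2)) T a)
    (hl : DifferentiableAt ℂ l a.2) (x : E) : (T (x, 0)).2 = 0 := by
  have h₁ : HasFDerivAt (fun v : E × ℂ => l v.2) ((ContinuousLinearMap.snd ℂ E ℂ).comp T) a :=
    (ContinuousLinearMap.snd ℂ E ℂ).hasFDerivAt.comp a hT
  have h₂ : HasFDerivAt (fun v : E × ℂ => l v.2)
      ((fderiv ℂ l a.2).comp (ContinuousLinearMap.snd ℂ E ℂ)) a :=
    hl.hasFDerivAt.comp a hasFDerivAt_snd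
  simpa using congr($(h₁.unique h₂) (x, 0))

namespace IsBiholoGerm

variable [NormedAddCommGroup E] [NormedSpace ℂ E]

lemma of_hasFDerivAt [FiniteDimensional ℂ E] {h : E → E} {T : E →L[ℂ] E}
    (hh : IsMapGerm h) (hT : HasFDerivAt h T 0) (hinj : Function.Injective T) :
    IsBiholoGerm h :=
  ⟨hh, (LinearEquiv.ofInjectiveEndo (T : E →ₗ[ℂ] E) hinj).toContinuousLinearEquiv,
    by rw [hT.fderiv]; rfl⟩

lemma comp {f g : E → E} (hf : IsBiholoGerm f) (hg : IsBiholoGerm g) :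
    IsBiholoGerm (f ∘ g) := by
  obtain ⟨⟨hfa, hf0⟩, ef, hef⟩ := hf
  obtain ⟨⟨hga, hg0⟩, eg, heg⟩ := hg
  rw [← hg0] at hfa hef
  refine ⟨⟨hfa.comp hga, by simp [hg0, hf0]⟩, eg.trans ef, ?_⟩
  rw [fderiv_comp 0 hfa.differentiableAt hga.differentiableAt, hef, heg]
  rfl

open scoped ContDiff in
lemma exists_inverse [CompleteSpace E] {φ : E → E} (hφ : IsBiholoGerm φ) :
    ∃ χ : E → E, IsBiholoGerm χ ∧ (∀ᶠ x in 𝓝 0, χ (φ x) = x) ∧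
      ∀ᶠ y in 𝓝 0, φ (χ y) = y := by
  obtain ⟨⟨han, h0⟩, e, he⟩ := hφ
  have hF : HasFDerivAt φ (e : E →L[ℂ] E) 0 := he ▸ han.differentiableAt.hasFDerivAt
  have hn : (ω : WithTop ℕ∞) ≠ 0 := by simp
  have hc : ContDiffAt ℂ ω φ 0 := han.contDiffAt
  have hs : HasStrictFDerivAt φ (e : E →L[ℂ] E) 0 := hc.hasStrictFDerivAt' hF hn
  have hinv := hc.to_localInverse hF hn
  have hinv0 := hc.localInverse_apply_image hF hn
  have hinv' := hs.to_localInverse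
  have hright := hs.eventually_right_inverse
  rw [h0] at hinv hinv0 hinv' hright
  exact ⟨hc.localInverse hF hn, ⟨⟨hinv.analyticAt, hinv0⟩, e.symm, hinv'.hasFDerivAt.fderiv⟩,
    hs.eventually_left_inverse, hright⟩

lemma deriv_ne_zero {l : ℂ → ℂ} (hl : IsBiholoGerm l) : deriv l 0 ≠ 0 := by
  obtain ⟨-, e, he⟩ := hl
  rw [← fderiv_apply_one_eq_deriv, he]
  exact e.map_ne_zero_iff.2 one_ne_zero

lemma exists_comp_eventuallyEq_comp [CompleteSpace E] {g g₀ : E → F} {l : F → F}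
    {φ ψ₀ : E → E} (hφ : IsBiholoGerm φ) (hgφ : g =ᶠ[𝓝 0] g₀ ∘ φ) (hψ₀ : IsBiholoGerm ψ₀)
    (hg₀ψ₀ : g₀ ∘ ψ₀ =ᶠ[𝓝 0] l ∘ g₀) :
    ∃ ψ : E → E, IsBiholoGerm ψ ∧ g ∘ ψ =ᶠ[𝓝 0] l ∘ g := by
  obtain ⟨χ, hχ, -, hφχ⟩ := hφ.exists_inverse
  have hψ : IsBiholoGerm (χ ∘ ψ₀ ∘ φ) := hχ.comp (hψ₀.comp hφ)
  refine ⟨χ ∘ ψ₀ ∘ φ, hψ, ?_⟩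
  filter_upwards [hψ.1.tendsto.eventually hgφ, (hψ₀.1.tendsto.comp hφ.1.tendsto).eventually hφχ,
    hφ.1.tendsto.eventually hg₀ψ₀, hgφ] with z h₁ h₂ h₃ h₄
  simp only [Function.comp_apply] at h₁ h₂ h₃ h₄ ⊢
  rw [h₁, h₂, h₃, h₄]

lemma augment_s4 [FiniteDimensional ℂ E] {D : Type*} [NormedAddCommGroup D] [NormedSpace ℂ D]
    [FiniteDimensional ℂ D]
    {hbar : E × ℂ → E} {l : ℂ → ℂ} {g : D → ℂ} {ψ : D → D}
    (hh : IsBiholoGerm fun v : E × ℂ => (hbar v, l v.2)) (hl : DifferentiableAt ℂ l 0)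
    (hg : IsMapGerm g) (hψ : IsBiholoGerm ψ) :
    IsBiholoGerm fun w : E × D => (hbar (w.1, g w.2), ψ w.2) := by
  obtain ⟨⟨hha, hh0⟩, e, he⟩ := hh
  obtain ⟨⟨hψa, hψ0⟩, eψ, heψ⟩ := hψ
  set m : E × D → E × ℂ := fun w => (w.1, g w.2)
  have hm0 : m 0 = 0 := by simp [m, hg.2]
  set M : E × D →L[ℂ] E × ℂ := (ContinuousLinearMap.fst ℂ E D).prod
    ((fderiv ℂ g 0).comp (ContinuousLinearMap.snd ℂ E D))
  have hm : HasFDerivAt m M 0 :=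
    hasFDerivAt_fst.prodMk (hg.1.differentiableAt.hasFDerivAt.comp 0 hasFDerivAt_snd)
  have hhm0 : HasFDerivAt (fun v : E × ℂ => (hbar v, l v.2)) (e : E × ℂ →L[ℂ] E × ℂ) 0 :=
    he ▸ hha.differentiableAt.hasFDerivAt
  have hhm : HasFDerivAt (fun v : E × ℂ => (hbar v, l v.2)) (e : E × ℂ →L[ℂ] E × ℂ) (m 0) :=
    hm0 ▸ hhm0
  set T : E × D →L[ℂ] E × D := ((ContinuousLinearMap.fst ℂ E ℂ).comp
    ((e : E × ℂ →L[ℂ] E × ℂ).comp M)).prod ((eψ : D →L[ℂ] D).comp (ContinuousLinearMap.snd ℂ E D))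
  have hT : HasFDerivAt (fun w : E × D => (hbar (w.1, g w.2), ψ w.2)) T 0 := by
    have h₁ : HasFDerivAt (fun w : E × D => hbar (w.1, g w.2))
        ((ContinuousLinearMap.fst ℂ E ℂ).comp ((e : E × ℂ →L[ℂ] E × ℂ).comp M)) 0 :=
      (ContinuousLinearMap.fst ℂ E ℂ).hasFDerivAt.comp 0 (hhm.comp 0 hm)
    have h₂ : HasFDerivAt (fun w : E × D => ψ w.2) ((eψ : D →L[ℂ] D).comp
        (ContinuousLinearMap.snd ℂ E D)) 0 :=
      (heψ ▸ hψa.differentiableAt.hasFDerivAt).comp 0 hasFDerivAt_snd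
    exact h₁.prodMk h₂
  have hbar0 : hbar (0, 0) = 0 := congr_arg Prod.fst hh0
  have hman : AnalyticAt ℂ m 0 := analyticAt_fst.prod (hg.1.comp_of_eq analyticAt_snd rfl)
  refine .of_hasFDerivAt ⟨?_, by simp [hg.2, hbar0, hψ0]⟩ hT ((injective_iff_map_eq_zero T).2 ?_)
  · exact (((ContinuousLinearMap.fst ℂ E ℂ).analyticAt _).comp (hha.comp_of_eq hman hm0)).prod
      (hψa.comp_of_eq analyticAt_snd rfl)
  · intro v hv
    have hv2 : v.2 = 0 := eψ.map_eq_zero_iff.1 (congr_arg Prod.snd hv)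
    have hMv : M v = (v.1, 0) := by simp [M, hv2]
    have hev : e (v.1, 0) = 0 :=
      Prod.ext (by simpa [T, hMv] using congr_arg Prod.fst hv) (hhm0.snd_apply_mk_zero hl v.1)
    exact Prod.ext (congr_arg Prod.fst (e.map_eq_zero_iff.1 hev) :) hv2

end IsBiholoGerm

lemma AnalyticAt.exists_pow_eq {u : ℂ → ℂ} {x : ℂ} (hu : AnalyticAt ℂ u x) (hux : u x ≠ 0)
    {w : ℕ} (hw : w ≠ 0) :
    ∃ t : ℂ → ℂ, AnalyticAt ℂ t x ∧ t x ≠ 0 ∧ ∀ᶠ y in 𝓝 x, t y ^ w = u y := by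
  obtain ⟨c, hc⟩ := IsAlgClosed.exists_pow_nat_eq (u x) (Nat.pos_of_ne_zero hw)
  have hc0 : c ≠ 0 := by rintro rfl; exact hux (by rw [← hc, zero_pow hw])
  -- `u / u x` is near `1`, inside the slit plane where `log` is analytic
  refine ⟨fun y => c * Complex.exp (Complex.log (u y / u x) / w), ?_, by simpa using hc0, ?_⟩
  · refine analyticAt_const.mul ((AnalyticAt.clog ?_ ?_).div analyticAt_const ?_).cexp
    · exact hu.div analyticAt_const hux
    · simp [hux]
    · exact_mod_cast hw
  · filter_upwards [hu.continuousAt.eventually_ne hux] with y hy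
    rw [mul_pow, hc, ← Complex.exp_nat_mul, mul_div_cancel₀ _ (by exact_mod_cast hw),
      Complex.exp_log (div_ne_zero hy hux), mul_div_cancel₀ _ hux]

lemma AnalyticAt.exists_pow_mul_eq {l : ℂ → ℂ} (hl : AnalyticAt ℂ l 0) (hl0 : l 0 = 0)
    (hd : deriv l 0 ≠ 0) {w : ℕ} (hw : w ≠ 0) :
    ∃ t : ℂ → ℂ, AnalyticAt ℂ t 0 ∧ t 0 ≠ 0 ∧ ∀ᶠ s in 𝓝 0, t s ^ w * s = l s := by
  obtain ⟨p, hp⟩ := hl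
  have hu : AnalyticAt ℂ (dslope l 0) 0 := ⟨p.fslope, hp.has_fpower_series_dslope_fslope⟩
  obtain ⟨t, hta, ht0, htw⟩ := hu.exists_pow_eq (by rwa [dslope_same]) hw
  refine ⟨t, hta, ht0, htw.mono fun s h => ?_⟩
  simpa [h, hl0, mul_comm] using sub_smul_dslope l 0 s

section WeightedScale

variable {ι : Type*}

def weightedScale (wi : ι → ℕ) (t : ℂ) (z : ι → ℂ) : ι → ℂ := fun i => t ^ wi i * z i

variable {wi : ι → ℕ}

lemma weightedScale_one (z : ι → ℂ) : weightedScale wi 1 z = z := by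
  ext i; simp [weightedScale]

lemma weightedScale_mul (s t : ℂ) (z : ι → ℂ) :
    weightedScale wi (s * t) z = weightedScale wi s (weightedScale wi t z) := by
  ext i; simp only [weightedScale, mul_pow, mul_assoc]

lemma weightedScale_zero_right (t : ℂ) : weightedScale wi t 0 = 0 := by
  ext i; simp [weightedScale]

lemma weightedScale_zero_left (hwi : ∀ i, 0 < wi i) (z : ι → ℂ) : weightedScale wi 0 z = 0 := by
  ext i; simp [weightedScale, (hwi i).ne']

lemma weightedScale_injective {c : ℂ} (hc : c ≠ 0) : Function.Injective (weightedScale wi c) :=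
  Function.LeftInverse.injective (g := weightedScale wi c⁻¹) fun z => by
    rw [← weightedScale_mul, inv_mul_cancel₀ hc, weightedScale_one]

variable [Fintype ι]

lemma AnalyticAt.weightedScale {E : Type*} [NormedAddCommGroup E] [NormedSpace ℂ E]
    {t : E → ℂ} {z : E → ι → ℂ} {x : E} (ht : AnalyticAt ℂ t x) (hz : AnalyticAt ℂ z x) :
    AnalyticAt ℂ (fun y => weightedScale wi (t y) (z y)) x :=
  AnalyticAt.pi fun i => (ht.pow _).mul
    (((ContinuousLinearMap.proj (R := ℂ) (φ := fun _ : ι => ℂ) i).analyticAt (z x)).comp hz)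

lemma hasFDerivAt_weightedScale_zero {τ : (ι → ℂ) → ℂ} (hτ : DifferentiableAt ℂ τ 0) :
    HasFDerivAt (fun z => weightedScale wi (τ z) z)
      (ContinuousLinearMap.pi (R := ℂ) (φ := fun _ : ι => ℂ) fun i =>
        τ 0 ^ wi i • ContinuousLinearMap.proj i) 0 := by
  refine hasFDerivAt_pi.2 fun i => ?_
  have h := (hτ.hasFDerivAt.pow (wi i)).mul (hasFDerivAt_apply i 0)
  refine h.congr_fderiv ?_
  ext v
  simp

lemma tendsto_weightedScale_zero (hwi : ∀ i, 0 < wi i) (z : ι → ℂ) :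
    Tendsto (fun s => weightedScale wi s z) (𝓝 0) (𝓝 0) := by
  simpa [ContinuousAt, weightedScale_zero_left hwi] using
    (analyticAt_id.weightedScale (wi := wi) (analyticAt_const (v := z) (x := 0))).continuousAt

lemma eventually_forall_weightedScale_mem {U : Set (ι → ℂ)} (hU : U ∈ 𝓝 0) {K : Set ℂ}
    (hK : IsCompact K) : ∀ᶠ z in 𝓝 0, ∀ t ∈ K, weightedScale wi t z ∈ U := by
  refine hK.eventually_forall_of_forall_eventually fun t _ => ?_
  refine (analyticAt_snd.weightedScale analyticAt_fst).continuousAt.preimage_mem_nhds ?_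
  simpa [weightedScale_zero_right] using hU

lemma eventually_forall_norm_le_weightedScale_eq {g : (ι → ℂ) → ℂ} (hg : AnalyticAt ℂ g 0)
    (hwi : ∀ i, 0 < wi i) {w : ℕ}
    (hqh : ∀ t : ℂ, ∀ᶠ z in 𝓝 0, g (weightedScale wi t z) = t ^ w * g z) (C : ℝ) :
    ∀ᶠ z in 𝓝 0, ∀ t : ℂ, ‖t‖ ≤ C → g (weightedScale wi t z) = t ^ w * g z := by
  filter_upwards [eventually_forall_weightedScale_mem (wi := wi) hg.eventually_analyticAt
    (isCompact_closedBall 0 (2 * max C 1))] with z hz t ht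
  -- identity theorem for `s ↦ g((ts)·z) - tʷ g(s·z)`, which vanishes near `s = 0` by `hqh t`
  set G : ℂ → ℂ := fun s => g (weightedScale wi (t * s) z) - t ^ w * g (weightedScale wi s z)
  have hGan : AnalyticOnNhd ℂ G (Metric.ball 0 2) := by
    intro s hs
    have hs2 : ‖s‖ < 2 := by simpa using hs
    have hcomp : ∀ a : ℂ, ‖a * s‖ ≤ 2 * max C 1 →
        AnalyticAt ℂ (fun s => g (weightedScale wi (a * s) z)) s := fun a ha =>
      (hz _ (mem_closedBall_zero_iff.2 ha)).comp_of_eq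
        ((analyticAt_const.mul analyticAt_id).weightedScale analyticAt_const) rfl
    have h1 := hcomp 1 (by rw [one_mul]; nlinarith [le_max_right C 1])
    simp only [one_mul] at h1
    refine (hcomp t ?_).sub (analyticAt_const.mul h1)
    rw [norm_mul]
    nlinarith [le_max_left C 1, norm_nonneg t, norm_nonneg s]
  have hG0 : G =ᶠ[𝓝 0] 0 := by
    filter_upwards [(tendsto_weightedScale_zero hwi z).eventually (hqh t)] with s hs
    simp [G, weightedScale_mul, hs]
  have hG1 := hGan.eqOn_zero_of_preconnected_of_eventuallyEq_zero
    (convex_ball (0 : ℂ) 2).isPreconnected (Metric.mem_ball_self two_pos) hG0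
    (show (1 : ℂ) ∈ Metric.ball 0 2 by simp)
  simpa [G, weightedScale_one, sub_eq_zero] using hG1

end WeightedScale

lemma QuasiHomogeneous.exists_isBiholoGerm_comp_eventuallyEq {d : ℕ} {g₀ : (Fin d → ℂ) → ℂ}
    (hqh : QuasiHomogeneous d g₀) (hg₀ : IsMapGerm g₀) {l : ℂ → ℂ} (hl : IsBiholoGerm l) :
    ∃ ψ : (Fin d → ℂ) → (Fin d → ℂ), IsBiholoGerm ψ ∧ g₀ ∘ ψ =ᶠ[𝓝 0] l ∘ g₀ := by
  obtain ⟨w, wi, hw, hwi, hhom⟩ := hqh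
  obtain ⟨t, hta, ht0, htl⟩ := hl.1.1.exists_pow_mul_eq hl.1.2 hl.deriv_ne_zero hw.ne'
  set τ : (Fin d → ℂ) → ℂ := t ∘ g₀
  have hτ : AnalyticAt ℂ τ 0 := (hg₀.2 ▸ hta).comp hg₀.1
  have hτ0 : τ 0 = t 0 := by simp [τ, hg₀.2]
  refine ⟨fun z => weightedScale wi (τ z) z, IsBiholoGerm.of_hasFDerivAt
    ⟨hτ.weightedScale analyticAt_id, weightedScale_zero_right _⟩
    (hasFDerivAt_weightedScale_zero hτ.differentiableAt) ?_, ?_⟩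
  · exact weightedScale_injective (hτ0 ▸ ht0)
  · have hτ_bdd : ∀ᶠ z in 𝓝 0, ‖τ z‖ < ‖τ 0‖ + 1 :=
      hτ.continuousAt.norm.eventually (eventually_lt_nhds (lt_add_one _))
    filter_upwards [hτ_bdd, eventually_forall_norm_le_weightedScale_eq hg₀.1 hwi hhom (‖τ 0‖ + 1),
      hg₀.tendsto.eventually htl] with z hz hhomz hlz
    simp only [Function.comp_apply, hhomz _ hz.le]
    exact hlz

theorem phi_equiv_augmentations_Aequiv_general (n p d : ℕ)
    (fbar fbar' : (Fin n → ℂ) × ℂ → (Fin p → ℂ))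
    (hphi : PhiEquivUnf n p fbar fbar')
    (g : (Fin d → ℂ) → ℂ) (hg : IsMapGerm g)
    (hgqh : ∃ g₀ : (Fin d → ℂ) → ℂ, IsMapGerm g₀ ∧ QuasiHomogeneous d g₀ ∧
      ∃ φ : (Fin d → ℂ) → (Fin d → ℂ), IsBiholoGerm φ ∧ g =ᶠ[𝓝 0] g₀ ∘ φ) :
    AEquiv
      (fun w : (Fin n → ℂ) × (Fin d → ℂ) => (fbar (w.1, g w.2), w.2))
      (fun w : (Fin n → ℂ) × (Fin d → ℂ) => (fbar' (w.1, g w.2), w.2)) := by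
  obtain ⟨hbar, kbar, l, hh, hk, hl, hF⟩ := hphi
  obtain ⟨g₀, hg₀, hqh, φ, hφ, hgφ⟩ := hgqh
  obtain ⟨ψ₀, hψ₀, hg₀ψ₀⟩ := hqh.exists_isBiholoGerm_comp_eventuallyEq hg₀ hl
  obtain ⟨ψ, hψ, hgψ⟩ := hφ.exists_comp_eventuallyEq_comp hgφ hψ₀ hg₀ψ₀
  refine ⟨fun w => (hbar (w.1, g w.2), ψ w.2), fun W => (kbar (W.1, g W.2), ψ W.2),
    hh.augment_s4 hl.1.1.differentiableAt hg hψ, hk.augment_s4 hl.1.1.differentiableAt hg hψ, ?_⟩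
  have hm : Tendsto (fun w : (Fin n → ℂ) × (Fin d → ℂ) => (w.1, g w.2)) (𝓝 0) (𝓝 0) :=
    continuousAt_fst.prodMk_nhds (hg.tendsto.comp continuousAt_snd)
  filter_upwards [hm.eventually hF, continuousAt_snd.eventually hgψ] with w hFw hgψw
  simp only [Function.comp_apply] at hFw hgψw ⊢
  rw [hgψw, (Prod.mk.inj hFw).1]

/-- Theorem 5.2 of the paper: if the one-parameter unfoldings `F` of `f` and `F'` of `f'`
are φ-equivalent, and `g` is `R`-equivalent to a quasi-homogeneous function germ, then
the augmentations `A_{F,g}(f)` and `A_{F',g}(f')` are `A`-equivalent. -/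
theorem phi_equiv_augmentations_Aequiv (n p d : ℕ)
    (f f' : (Fin n → ℂ) → (Fin p → ℂ))
    (fbar fbar' : (Fin n → ℂ) × ℂ → (Fin p → ℂ))
    (hf : IsMapGerm f) (hf' : IsMapGerm f')
    (hF : IsMapGerm (fun w : (Fin n → ℂ) × ℂ => (fbar w, w.2)))
    (hF' : IsMapGerm (fun w : (Fin n → ℂ) × ℂ => (fbar' w, w.2)))
    (hunf : ∀ᶠ x in 𝓝 (0 : Fin n → ℂ), fbar (x, 0) = f x)
    (hunf' : ∀ᶠ x in 𝓝 (0 : Fin n → ℂ), fbar' (x, 0) = f' x)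
    (hphi : PhiEquivUnf n p fbar fbar')
    (g : (Fin d → ℂ) → ℂ) (hg : IsMapGerm g)
    (hgqh : ∃ g₀ : (Fin d → ℂ) → ℂ, IsMapGerm g₀ ∧ QuasiHomogeneous d g₀ ∧
      ∃ φ : (Fin d → ℂ) → (Fin d → ℂ), IsBiholoGerm φ ∧ g =ᶠ[𝓝 0] g₀ ∘ φ) :
    AEquiv
      (fun w : (Fin n → ℂ) × (Fin d → ℂ) => (fbar (w.1, g w.2), w.2))
      (fun w : (Fin n → ℂ) × (Fin d → ℂ) => (fbar' (w.1, g w.2), w.2)) :=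
  phi_equiv_augmentations_Aequiv_general n p d fbar fbar' hphi g hg hgqh
end
end

section
/- Let f = (f_1,…,f_p) : (ℂ^n,0) → (ℂ^p,0) be a map-germ, let x^α be a monomial in the source variables x = (x_1,…,x_n) with α a nonzero multi-index, let k ≥ 1 be an integer, let q_1,…,q_{k−1} : (ℂ,0) → (ℂ,0) be function germs (so q_i(0) = 0), and let s_1,…,s_{k−1} : (ℂ^{p−1},0) → (ℂ,0) be function germs (so s_i(0) = 0). Define the one-parameter unfoldings F(x,λ) = ( f_1(x), …, f_{p−1}(x), f_p(x) + (1 + Σ_{i=1}^{k−1} q_i(λ)·s_i(f_1(x),…,f_{p−1}(x)))·λ·x^α, λ ) and G(x,Λ) = ( f_1(x), …, f_{p−1}(x), f_p(x) + Λ·x^α, Λ ). Then F and G are weak equivalent; more precisely, there exist weak germs of biholomorphism Φ of (ℂ^n×ℂ,0) and Ψ of (ℂ^p×ℂ,0) such that Ψ ∘ F ∘ Φ = G as germs. -/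
open Filter Topology

noncomputable section

variable {E F : Type*}

/-- A weak germ of biholomorphism of `(E × ℂ, 0)`: a germ of biholomorphism whose last
component has the form `λ · u(x,λ)` with `u 0 ≠ 0`. -/
def IsWeakBiholoGerm [NormedAddCommGroup E] [NormedSpace ℂ E] (Φ : E × ℂ → E × ℂ) : Prop :=
  IsBiholoGerm Φ ∧ ∃ u : E × ℂ → ℂ, AnalyticAt ℂ u 0 ∧ u 0 ≠ 0 ∧
    ∀ᶠ w in 𝓝 0, (Φ w).2 = w.2 * u w

/-! With `D = 1 + Σ qᵢ(λ)·sᵢ(f₁,…,f_{p−1})`, the unfolding `F` is `G` precomposed with the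
parameter rescaling `(x,λ) ↦ (x, λ·D(x,λ))` in every coordinate but the last one. The last one is
repaired in the target by the rescaling `(y,λ) ↦ (y, λ·D̃(y,λ))`, `D̃ = 1 + Σ qᵢ(λ)·sᵢ(y₁,…,y_{p−1})`:
as `F` leaves `f₁,…,f_{p−1}` untouched, `D̃ ∘ F = D`. Hence `Ψ ∘ F = G ∘ R` for the two rescalings
`Ψ`, `R`, and `Φ` is the local inverse of `R`; both rescalings are weak since `D(0) = D̃(0) = 1`. -/

theorem HasStrictFDerivAt.analyticAt_localInverse {𝕜 : Type*} [NontriviallyNormedField 𝕜]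
    [NormedAddCommGroup E] [NormedSpace 𝕜 E] [CompleteSpace E]
    [NormedAddCommGroup F] [NormedSpace 𝕜 F] {f : E → F} {i : E ≃L[𝕜] F} {a : E}
    (hf : AnalyticAt 𝕜 f a) (hfi : HasStrictFDerivAt f (i : E →L[𝕜] F) a) :
    AnalyticAt 𝕜 (hfi.localInverse f i a) (f a) := by
  obtain ⟨p, hp⟩ := hf
  have hp1 : p 1 = (continuousMultilinearCurryFin1 𝕜 E F).symm i := by
    rw [← hp.hasFDerivAt.unique hfi.hasFDerivAt, LinearIsometryEquiv.symm_apply_apply]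
  exact ((hfi.toOpenPartialHomeomorph f).hasFPowerSeriesAt_symm
    hfi.mem_toOpenPartialHomeomorph_source hp hp1).analyticAt

theorem IsBiholoGerm.exists_rightInverse [NormedAddCommGroup E] [NormedSpace ℂ E]
    [CompleteSpace E] {φ : E → E} (hφ : IsBiholoGerm φ) :
    ∃ ψ : E → E, IsBiholoGerm ψ ∧ ∀ᶠ w in 𝓝 0, φ (ψ w) = w := by
  obtain ⟨⟨hana, hφ0⟩, e, he⟩ := hφ
  have hstrict : HasStrictFDerivAt φ (e : E →L[ℂ] E) 0 := he ▸ hana.hasStrictFDerivAt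
  have hψ0 : hstrict.localInverse φ e 0 0 = 0 := by
    simpa [hφ0] using hstrict.localInverse_apply_image
  refine ⟨hstrict.localInverse φ e 0, ⟨⟨?_, hψ0⟩, e.symm, ?_⟩, ?_⟩
  · simpa [hφ0] using hstrict.analyticAt_localInverse hana
  · simpa [hφ0] using hstrict.to_localInverse.hasFDerivAt.fderiv
  · simpa [hφ0] using hstrict.eventually_right_inverse

section RescaleSnd

variable [NormedAddCommGroup E] [NormedSpace ℂ E]

def rescaleSnd (D : E × ℂ → ℂ) (w : E × ℂ) : E × ℂ := (w.1, w.2 * D w)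

variable {D : E × ℂ → ℂ}

theorem analyticAt_rescaleSnd (hD : AnalyticAt ℂ D 0) : AnalyticAt ℂ (rescaleSnd D) 0 :=
  analyticAt_fst.prod (analyticAt_snd.mul hD)

theorem hasFDerivAt_rescaleSnd (hD : AnalyticAt ℂ D 0) (hD0 : D 0 ≠ 0) :
    HasFDerivAt (rescaleSnd D) (((ContinuousLinearEquiv.refl ℂ E).prodCongr
      (ContinuousLinearEquiv.unitsEquivAut ℂ (Units.mk0 (D 0) hD0))) : E × ℂ →L[ℂ] E × ℂ) 0 := by
  refine (hasFDerivAt_fst.prodMk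
    (hasFDerivAt_snd.mul hD.differentiableAt.hasFDerivAt)).congr_fderiv ?_
  ext <;> simp [mul_comm]

theorem isWeakBiholoGerm_rescaleSnd (hD : AnalyticAt ℂ D 0) (hD0 : D 0 ≠ 0) :
    IsWeakBiholoGerm (rescaleSnd D) :=
  ⟨⟨⟨analyticAt_rescaleSnd hD, by simp [rescaleSnd]⟩, _, (hasFDerivAt_rescaleSnd hD hD0).fderiv⟩,
    D, hD, hD0, .of_forall fun _ => rfl⟩

theorem IsBiholoGerm.isWeakBiholoGerm_of_rescaleSnd_comp {ψ : E × ℂ → E × ℂ}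
    (hψ : IsBiholoGerm ψ) (hD : AnalyticAt ℂ D 0) (hD0 : D 0 ≠ 0)
    (h : ∀ᶠ w in 𝓝 0, rescaleSnd D (ψ w) = w) : IsWeakBiholoGerm ψ := by
  have hDψ : AnalyticAt ℂ (fun w => D (ψ w)) 0 := by
    rw [← hψ.1.2] at hD
    exact hD.comp hψ.1.1
  have hDψ0 : D (ψ 0) ≠ 0 := by rwa [hψ.1.2]
  refine ⟨hψ, fun w => (D (ψ w))⁻¹, hDψ.inv hDψ0, inv_ne_zero hDψ0, ?_⟩
  filter_upwards [h, hDψ.continuousAt.eventually_ne hDψ0] with w hw hne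
  rw [eq_mul_inv_iff_mul_eq₀ (by exact hne)]
  exact congrArg Prod.snd hw

theorem exists_isWeakBiholoGerm_rightInverse_rescaleSnd [CompleteSpace E]
    (hD : AnalyticAt ℂ D 0) (hD0 : D 0 ≠ 0) :
    ∃ ψ : E × ℂ → E × ℂ, IsWeakBiholoGerm ψ ∧ ∀ᶠ w in 𝓝 0, rescaleSnd D (ψ w) = w := by
  obtain ⟨ψ, hψ, hinv⟩ := (isWeakBiholoGerm_rescaleSnd hD hD0).1.exists_rightInverse
  exact ⟨ψ, hψ.isWeakBiholoGerm_of_rescaleSnd_comp hD hD0 hinv, hinv⟩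

end RescaleSnd

section UnfoldingFactor

variable {ι : Type*} [Fintype ι]

def unfoldingFactor (q : ι → ℂ → ℂ) (s : ι → F → ℂ) (g : E → F) (w : E × ℂ) : ℂ :=
  1 + ∑ i, q i w.2 * s i (g w.1)

variable {q : ι → ℂ → ℂ} {s : ι → F → ℂ} {g : E → F}

theorem unfoldingFactor_zero [Zero E] (hq : ∀ i, q i 0 = 0) : unfoldingFactor q s g 0 = 1 := by
  simp [unfoldingFactor, hq]

variable [NormedAddCommGroup E] [NormedSpace ℂ E] [NormedAddCommGroup F] [NormedSpace ℂ F]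

theorem analyticAt_unfoldingFactor (hq : ∀ i, AnalyticAt ℂ (q i) 0)
    (hs : ∀ i, AnalyticAt ℂ (s i) (g 0)) (hg : AnalyticAt ℂ g 0) :
    AnalyticAt ℂ (unfoldingFactor q s g) 0 :=
  analyticAt_const.add <| Finset.analyticAt_fun_sum _ fun i _ =>
    ((hq i).comp (f := Prod.snd) analyticAt_snd).mul
      ((hs i).comp (f := fun w : E × ℂ => g w.1) (hg.comp (f := Prod.fst) analyticAt_fst))

end UnfoldingFactor

theorem analyticAt_fin_init {𝕜 : Type*} [NontriviallyNormedField 𝕜] [NormedAddCommGroup E]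
    [NormedSpace 𝕜 E] {n : ℕ} (y : Fin (n + 1) → E) :
    AnalyticAt 𝕜 (Fin.init : (Fin (n + 1) → E) → Fin n → E) y :=
  AnalyticAt.pi fun j => (ContinuousLinearMap.proj (R := 𝕜) j.castSucc).analyticAt y

theorem normal_form_weak_equivalent_general (n p' k' : ℕ)
    (f : (Fin n → ℂ) → (Fin (p' + 1) → ℂ)) (hf : IsMapGerm f)
    (α : Fin n → ℕ)
    (q : Fin k' → ℂ → ℂ) (hq : ∀ i, IsMapGerm (q i))
    (s : Fin k' → (Fin p' → ℂ) → ℂ) (hs : ∀ i, IsMapGerm (s i)) :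
    ∃ (Φ : (Fin n → ℂ) × ℂ → (Fin n → ℂ) × ℂ)
      (Ψ : (Fin (p' + 1) → ℂ) × ℂ → (Fin (p' + 1) → ℂ) × ℂ),
      IsWeakBiholoGerm Φ ∧ IsWeakBiholoGerm Ψ ∧
      (Ψ ∘ (fun w : (Fin n → ℂ) × ℂ =>
          (Function.update (f w.1) (Fin.last p')
            (f w.1 (Fin.last p') +
              (1 + ∑ i, q i w.2 * s i (fun j : Fin p' => f w.1 j.castSucc)) * w.2 *
                ∏ i, w.1 i ^ α i),
           w.2)) ∘ Φ)
        =ᶠ[𝓝 0]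
      (fun w : (Fin n → ℂ) × ℂ =>
          (Function.update (f w.1) (Fin.last p')
            (f w.1 (Fin.last p') + w.2 * ∏ i, w.1 i ^ α i),
           w.2)) := by
  have hq0 : ∀ i, q i 0 = 0 := fun i => (hq i).2
  have hsrc : AnalyticAt ℂ (unfoldingFactor q s fun x => Fin.init (f x)) 0 :=
    analyticAt_unfoldingFactor (fun i => (hq i).1) (fun i => by rw [hf.2]; exact (hs i).1)
      ((analyticAt_fin_init (𝕜 := ℂ) _).comp hf.1)
  have htgt : AnalyticAt ℂ (unfoldingFactor q s (Fin.init : (Fin (p' + 1) → ℂ) → _)) 0 :=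
    analyticAt_unfoldingFactor (fun i => (hq i).1) (fun i => (hs i).1) (analyticAt_fin_init 0)
  obtain ⟨Φ, hΦ, hΦinv⟩ := exists_isWeakBiholoGerm_rightInverse_rescaleSnd hsrc
    (by rw [unfoldingFactor_zero hq0]; exact one_ne_zero)
  refine ⟨Φ, rescaleSnd (unfoldingFactor q s Fin.init), hΦ,
    isWeakBiholoGerm_rescaleSnd htgt (by rw [unfoldingFactor_zero hq0]; exact one_ne_zero), ?_⟩
  filter_upwards [hΦinv] with w hw
  conv_rhs => rw [← hw]
  simp only [Function.comp_apply]
  generalize Φ w = v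
  simp only [rescaleSnd, unfoldingFactor, Fin.init_update_last, Prod.mk.injEq, and_true]
  rw [mul_comm v.2]
  rfl

/-- Proposition 6.3 of the paper (concrete form): with `p = p'+1`, `k = k'+1`, the
one-parameter unfolding
`F(x,λ) = (f₁(x),…,f_{p−1}(x), f_p(x) + (1 + Σᵢ qᵢ(λ)·sᵢ(f₁(x),…,f_{p−1}(x)))·λ·x^α, λ)`
is weak equivalent to
`G(x,Λ) = (f₁(x),…,f_{p−1}(x), f_p(x) + Λ·x^α, Λ)`:
there are weak germs of biholomorphism `Φ`, `Ψ` with `Ψ ∘ F ∘ Φ = G` as germs. -/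
theorem normal_form_weak_equivalent (n p' k' : ℕ)
    (f : (Fin n → ℂ) → (Fin (p' + 1) → ℂ)) (hf : IsMapGerm f)
    (α : Fin n → ℕ) (hα : α ≠ 0)
    (q : Fin k' → ℂ → ℂ) (hq : ∀ i, IsMapGerm (q i))
    (s : Fin k' → (Fin p' → ℂ) → ℂ) (hs : ∀ i, IsMapGerm (s i)) :
    ∃ (Φ : (Fin n → ℂ) × ℂ → (Fin n → ℂ) × ℂ)
      (Ψ : (Fin (p' + 1) → ℂ) × ℂ → (Fin (p' + 1) → ℂ) × ℂ),
      IsWeakBiholoGerm Φ ∧ IsWeakBiholoGerm Ψ ∧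
      (Ψ ∘ (fun w : (Fin n → ℂ) × ℂ =>
          (Function.update (f w.1) (Fin.last p')
            (f w.1 (Fin.last p') +
              (1 + ∑ i, q i w.2 * s i (fun j : Fin p' => f w.1 j.castSucc)) * w.2 *
                ∏ i, w.1 i ^ α i),
           w.2)) ∘ Φ)
        =ᶠ[𝓝 0]
      (fun w : (Fin n → ℂ) × ℂ =>
          (Function.update (f w.1) (Fin.last p')
            (f w.1 (Fin.last p') + w.2 * ∏ i, w.1 i ^ α i),
           w.2)) :=
  normal_form_weak_equivalent_general n p' k' f hf α q hq s hs
end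
end

section
/- Let F(x,λ) = (f̄(x,λ), λ) and F'(x,λ) = (f̄'(x,λ), λ) be one-parameter unfoldings of map-germs f, f' : (ℂ^n,0) → (ℂ^p,0) respectively, and suppose F and F' are φ-equivalent. If F is substantial, then F' is substantial. -/
open Filter Topology

noncomputable section

variable {E F : Type*}

/-- A holomorphic vector field germ `η` is liftable over `Fm` if there is a holomorphic
vector field germ `ξ` with `dFm(x)·ξ(x) = η(Fm(x))` near `0`. -/
def IsLiftable [NormedAddCommGroup E] [NormedSpace ℂ E]
    [NormedAddCommGroup F] [NormedSpace ℂ F] (Fm : E → F) (η : F → F) : Prop :=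
  AnalyticAt ℂ η 0 ∧ ∃ ξ : E → E, AnalyticAt ℂ ξ 0 ∧
    ∀ᶠ x in 𝓝 0, fderiv ℂ Fm x (ξ x) = η (Fm x)

/-- A one-parameter unfolding is substantial if it admits a liftable vector field whose
last component is `Λ`. -/
def Substantial [NormedAddCommGroup E] [NormedSpace ℂ E]
    [NormedAddCommGroup F] [NormedSpace ℂ F] (Fm : E × ℂ → F × ℂ) : Prop :=
  ∃ η : F × ℂ → F × ℂ, IsLiftable Fm η ∧ ∀ᶠ W in 𝓝 0, (η W).2 = W.2

section Aux

variable {E' F' G' : Type*} [NormedAddCommGroup E'] [NormedSpace ℂ E']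
  [NormedAddCommGroup F'] [NormedSpace ℂ F'] [NormedAddCommGroup G'] [NormedSpace ℂ G']

/-- Applying an analytic family of continuous linear maps to an analytic vector field is
analytic. -/
lemma analyticAt_clm_apply' {A : E' → (F' →L[ℂ] G')} {v : E' → F'} {x : E'}
    (hA : AnalyticAt ℂ A x) (hv : AnalyticAt ℂ v x) :
    AnalyticAt ℂ (fun y => A y (v y)) x :=
  ((ContinuousLinearMap.id ℂ (F' →L[ℂ] G')).analyticAt_bilinear (A x, v x)).comp₂ hA hv

/-- Analytic local inverse of an analytic germ with invertible derivative. -/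
lemma exists_local_inverse [CompleteSpace E']
    {G : E' → E'} (hG : AnalyticAt ℂ G 0) (h0 : G 0 = 0)
    {e : E' ≃L[ℂ] E'} (he : fderiv ℂ G 0 = (e : E' →L[ℂ] E')) :
    ∃ Ginv : E' → E', AnalyticAt ℂ Ginv 0 ∧ Ginv 0 = 0 ∧
      (∀ᶠ x in 𝓝 (0 : E'), Ginv (G x) = x) ∧ (∀ᶠ y in 𝓝 (0 : E'), G (Ginv y) = y) := by
  have hs : HasStrictFDerivAt G (e : E' →L[ℂ] E') 0 := he ▸ hG.hasStrictFDerivAt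
  refine ⟨hs.localInverse G e 0, ?_, ?_, hs.eventually_left_inverse, ?_⟩
  · have h1 : AnalyticAt ℂ (hs.toOpenPartialHomeomorph G).symm ((hs.toOpenPartialHomeomorph G) 0) := by
      refine (hs.toOpenPartialHomeomorph G).analyticAt_symm' (i := e)
        hs.mem_toOpenPartialHomeomorph_source ?_ ?_
      · exact hG
      · exact he
    have h2 : ((hs.toOpenPartialHomeomorph G) 0 : E') = 0 := by
      rw [show ((hs.toOpenPartialHomeomorph G) 0 : E') = G 0 from rfl, h0]
    rw [h2] at h1
    exact h1
  · have h3 := hs.localInverse_apply_image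
    rwa [h0] at h3
  · have h4 := hs.eventually_right_inverse
    rwa [h0] at h4

end Aux

/-- Corollary 6.7 of the paper: if two one-parameter unfoldings are φ-equivalent and
one of them is substantial, then both are substantial. -/
theorem phi_equivalent_substantial (n p : ℕ)
    (f f' : (Fin n → ℂ) → (Fin p → ℂ))
    (fbar fbar' : (Fin n → ℂ) × ℂ → (Fin p → ℂ))
    (hf : IsMapGerm f) (hf' : IsMapGerm f')
    (hF : IsMapGerm (fun w : (Fin n → ℂ) × ℂ => (fbar w, w.2)))
    (hF' : IsMapGerm (fun w : (Fin n → ℂ) × ℂ => (fbar' w, w.2)))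
    (hunf : ∀ᶠ x in 𝓝 (0 : Fin n → ℂ), fbar (x, 0) = f x)
    (hunf' : ∀ᶠ x in 𝓝 (0 : Fin n → ℂ), fbar' (x, 0) = f' x)
    (hphi : PhiEquivUnf n p fbar fbar')
    (hsub : Substantial (fun w : (Fin n → ℂ) × ℂ => (fbar w, w.2))) :
    Substantial (fun w : (Fin n → ℂ) × ℂ => (fbar' w, w.2)) := by
  classical
  obtain ⟨hbar, kbar, l, hH, hK, hl, heq⟩ := hphi
  obtain ⟨η, ⟨hηA, ξ, hξA, hlift⟩, hlast⟩ := hsub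
  set Fm : ((Fin n → ℂ) × ℂ) → ((Fin p → ℂ) × ℂ) := fun w => (fbar w, w.2) with hFmdef
  set Fm' : ((Fin n → ℂ) × ℂ) → ((Fin p → ℂ) × ℂ) := fun w => (fbar' w, w.2) with hFm'def
  set H : ((Fin n → ℂ) × ℂ) → ((Fin n → ℂ) × ℂ) := fun w => (hbar w, l w.2) with hHdef
  set K : ((Fin p → ℂ) × ℂ) → ((Fin p → ℂ) × ℂ) := fun W => (kbar W, l W.2) with hKdef
  obtain ⟨⟨HA, H0⟩, eH, heH⟩ := hH
  obtain ⟨⟨KA, K0⟩, eK, heK⟩ := hK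
  obtain ⟨⟨lA, l0⟩, el, hel⟩ := hl
  obtain ⟨FmA, Fm0⟩ := hF
  obtain ⟨Fm'A, Fm'0⟩ := hF'
  -- local inverses
  obtain ⟨Hinv, HinvA, Hinv0, Hleft, Hright⟩ := exists_local_inverse HA H0 heH
  obtain ⟨Kinv, KinvA, Kinv0, Kleft, Kright⟩ := exists_local_inverse KA K0 heK
  -- derivative of l at 0 is nonzero
  have hdl0 : deriv l 0 ≠ 0 := by
    have h1 : deriv l 0 = (el : ℂ →L[ℂ] ℂ) 1 := by
      rw [← fderiv_apply_one_eq_deriv, hel]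
    rw [h1]
    intro h
    have h2 : el 1 = el 0 := by simpa using h
    exact one_ne_zero (el.injective h2)
  -- the "divided" function v with z * v z = l z
  obtain ⟨pl, hpl⟩ := lA
  have lA : AnalyticAt ℂ l 0 := ⟨pl, hpl⟩
  have hvA : AnalyticAt ℂ (dslope l 0) 0 :=
    (HasFPowerSeriesAt.has_fpower_series_dslope_fslope hpl).analyticAt
  set v : ℂ → ℂ := dslope l 0 with hvdef
  have hmul : ∀ z : ℂ, z * v z = l z := by
    intro z
    have h1 := sub_smul_dslope l 0 z
    simpa [l0, smul_eq_mul] using h1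
  -- eventual analyticity of the relevant maps
  have HAev : ∀ᶠ w in 𝓝 (0 : ((Fin n → ℂ) × ℂ)), AnalyticAt ℂ H w := HA.eventually_analyticAt
  have FmAev : ∀ᶠ w in 𝓝 (0 : ((Fin n → ℂ) × ℂ)), AnalyticAt ℂ Fm w := FmA.eventually_analyticAt
  have Fm'Aev : ∀ᶠ w in 𝓝 (0 : ((Fin n → ℂ) × ℂ)), AnalyticAt ℂ Fm' w := Fm'A.eventually_analyticAt
  have KAev : ∀ᶠ W in 𝓝 (0 : ((Fin p → ℂ) × ℂ)), AnalyticAt ℂ K W := KA.eventually_analyticAt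
  -- continuity transports
  have HC : Tendsto H (𝓝 0) (𝓝 (0 : ((Fin n → ℂ) × ℂ))) := by
    have h := HA.continuousAt; rwa [ContinuousAt, H0] at h
  have FmC : Tendsto Fm (𝓝 0) (𝓝 (0 : ((Fin p → ℂ) × ℂ))) := by
    have h := FmA.continuousAt; rwa [ContinuousAt, Fm0] at h
  have Fm'C : Tendsto Fm' (𝓝 0) (𝓝 (0 : ((Fin p → ℂ) × ℂ))) := by
    have h := Fm'A.continuousAt; rwa [ContinuousAt, Fm'0] at h
  have HinvC : Tendsto Hinv (𝓝 0) (𝓝 (0 : ((Fin n → ℂ) × ℂ))) := by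
    have h := HinvA.continuousAt; rwa [ContinuousAt, Hinv0] at h
  have KinvC : Tendsto Kinv (𝓝 0) (𝓝 (0 : ((Fin p → ℂ) × ℂ))) := by
    have h := KinvA.continuousAt; rwa [ContinuousAt, Kinv0] at h
  have hm0 : (Kinv (0 : ((Fin p → ℂ) × ℂ))).2 = 0 := by rw [Kinv0]; rfl
  have hmC : Tendsto (fun W : ((Fin p → ℂ) × ℂ) => (Kinv W).2) (𝓝 0) (𝓝 (0 : ℂ)) := by
    have h1 : ContinuousAt (fun W : ((Fin p → ℂ) × ℂ) => (Kinv W).2) 0 :=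
      ContinuousAt.comp continuousAt_snd KinvA.continuousAt
    rwa [ContinuousAt, hm0] at h1
  -- the vector fields
  set ξ' : ((Fin n → ℂ) × ℂ) → ((Fin n → ℂ) × ℂ) := fun y => fderiv ℂ H (Hinv y) (ξ (Hinv y)) with hξ'def
  set η₀ : ((Fin p → ℂ) × ℂ) → ((Fin p → ℂ) × ℂ) := fun W => fderiv ℂ K (Kinv W) (η (Kinv W)) with hη₀def
  set g : ((Fin p → ℂ) × ℂ) → ℂ := fun W => v ((Kinv W).2) / deriv l ((Kinv W).2) with hgdef
  set η' : ((Fin p → ℂ) × ℂ) → ((Fin p → ℂ) × ℂ) := fun W => g W • η₀ W with hη'def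
  set ξ'' : ((Fin n → ℂ) × ℂ) → ((Fin n → ℂ) × ℂ) := fun y => g (Fm' y) • ξ' y with hξ''def
  -- analyticity of the pieces
  have hfdHA : AnalyticAt ℂ (fun y => fderiv ℂ H (Hinv y)) 0 := by
    have h1 : AnalyticAt ℂ (fderiv ℂ H) (Hinv 0) := by rw [Hinv0]; exact HA.fderiv
    exact h1.comp HinvA
  have hξHA : AnalyticAt ℂ (fun y => ξ (Hinv y)) 0 := by
    have h1 : AnalyticAt ℂ ξ (Hinv 0) := by rw [Hinv0]; exact hξA
    exact h1.comp HinvA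
  have hξ'A : AnalyticAt ℂ ξ' 0 := analyticAt_clm_apply' hfdHA hξHA
  have hfdKA : AnalyticAt ℂ (fun W => fderiv ℂ K (Kinv W)) 0 := by
    have h1 : AnalyticAt ℂ (fderiv ℂ K) (Kinv 0) := by rw [Kinv0]; exact KA.fderiv
    exact h1.comp KinvA
  have hηKA : AnalyticAt ℂ (fun W => η (Kinv W)) 0 := by
    have h1 : AnalyticAt ℂ η (Kinv 0) := by rw [Kinv0]; exact hηA
    exact h1.comp KinvA
  have hη₀A : AnalyticAt ℂ η₀ 0 := analyticAt_clm_apply' hfdKA hηKA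
  have hmA : AnalyticAt ℂ (fun W : ((Fin p → ℂ) × ℂ) => (Kinv W).2) 0 :=
    analyticAt_snd.comp KinvA
  have hdlA : AnalyticAt ℂ (deriv l) 0 := by
    have h1 : AnalyticAt ℂ (fun z => fderiv ℂ l z 1) 0 :=
      analyticAt_clm_apply' lA.fderiv analyticAt_const
    have h2 : deriv l = fun z => fderiv ℂ l z 1 := by
      funext z; rw [fderiv_apply_one_eq_deriv]
    rw [h2]; exact h1
  have hgA : AnalyticAt ℂ g 0 := by
    have h1 : AnalyticAt ℂ (fun W : ((Fin p → ℂ) × ℂ) => v ((Kinv W).2)) 0 := by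
      have h := hvA; rw [← hm0] at h
      exact AnalyticAt.comp (f := fun W : ((Fin p → ℂ) × ℂ) => (Kinv W).2) (x := 0) h hmA
    have h2 : AnalyticAt ℂ (fun W : ((Fin p → ℂ) × ℂ) => deriv l ((Kinv W).2)) 0 := by
      have h := hdlA; rw [← hm0] at h
      exact AnalyticAt.comp (f := fun W : ((Fin p → ℂ) × ℂ) => (Kinv W).2) (x := 0) h hmA
    exact h1.div h2 (by rw [hm0]; exact hdl0)
  have hη'A : AnalyticAt ℂ η' 0 := hgA.smul hη₀A
  have hgFm'A : AnalyticAt ℂ (fun y => g (Fm' y)) 0 := by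
    have h1 : AnalyticAt ℂ g (Fm' 0) := by rw [Fm'0]; exact hgA
    exact h1.comp Fm'A
  have hξ''A : AnalyticAt ℂ ξ'' 0 := hgFm'A.smul hξ'A
  -- chain rule identity near 0
  have hder : ∀ᶠ w in 𝓝 (0 : ((Fin n → ℂ) × ℂ)),
      fderiv ℂ Fm' (H w) (fderiv ℂ H w (ξ w)) = fderiv ℂ K (Fm w) (fderiv ℂ Fm w (ξ w)) := by
    have hder0 : fderiv ℂ (Fm' ∘ H) =ᶠ[𝓝 (0 : ((Fin n → ℂ) × ℂ))] fderiv ℂ (K ∘ Fm) := heq.fderiv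
    filter_upwards [hder0, HAev, FmAev, HC.eventually Fm'Aev, FmC.eventually KAev]
      with w h1 h2 h3 h4 h5
    have c1 : fderiv ℂ (Fm' ∘ H) w = (fderiv ℂ Fm' (H w)).comp (fderiv ℂ H w) :=
      fderiv_comp w h4.differentiableAt h2.differentiableAt
    have c2 : fderiv ℂ (K ∘ Fm) w = (fderiv ℂ K (Fm w)).comp (fderiv ℂ Fm w) :=
      fderiv_comp w h5.differentiableAt h3.differentiableAt
    have h6 := congrFun (congrArg DFunLike.coe h1) (ξ w)
    rw [c1, c2] at h6
    simpa using h6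
  -- main liftability equation for η₀
  have main1 : ∀ᶠ y in 𝓝 (0 : ((Fin n → ℂ) × ℂ)), fderiv ℂ Fm' y (ξ' y) = η₀ (Fm' y) := by
    have P : ∀ᶠ w in 𝓝 (0 : ((Fin n → ℂ) × ℂ)),
        fderiv ℂ Fm' (H w) (fderiv ℂ H w (ξ w)) = η₀ (Fm' (H w)) := by
      filter_upwards [hder, hlift, FmC.eventually Kleft, heq] with w h1 h2 h3 h4
      have h4' : Fm' (H w) = K (Fm w) := h4
      rw [h1, h2, h4', hη₀def]
      simp only [h3]
    filter_upwards [Hright, HinvC.eventually P] with y h1 h2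
    rw [h1] at h2
    exact h2
  -- right-inverse property in the second coordinate
  have main3 : ∀ᶠ W in 𝓝 (0 : ((Fin p → ℂ) × ℂ)), l ((Kinv W).2) = W.2 := by
    filter_upwards [Kright] with W h1
    exact congrArg Prod.snd h1
  -- second component of η₀
  have main2 : ∀ᶠ W in 𝓝 (0 : ((Fin p → ℂ) × ℂ)),
      (η₀ W).2 = deriv l ((Kinv W).2) * ((Kinv W).2) := by
    have hKev : ∀ᶠ W in 𝓝 (0 : ((Fin p → ℂ) × ℂ)), AnalyticAt ℂ K (Kinv W) := KinvC.eventually KAev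
    have hlev : ∀ᶠ W in 𝓝 (0 : ((Fin p → ℂ) × ℂ)), AnalyticAt ℂ l ((Kinv W).2) :=
      hmC.eventually lA.eventually_analyticAt
    have hsnd : ∀ᶠ W in 𝓝 (0 : ((Fin p → ℂ) × ℂ)), (η (Kinv W)).2 = (Kinv W).2 := KinvC.eventually hlast
    filter_upwards [hKev, hlev, hsnd] with W h1 h2 h3
    have d1 : HasFDerivAt (fun V : ((Fin p → ℂ) × ℂ) => l V.2)
        ((ContinuousLinearMap.snd ℂ (Fin p → ℂ) ℂ).comp (fderiv ℂ K (Kinv W))) (Kinv W) := by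
      have d := hasFDerivAt_snd.comp (Kinv W) h1.differentiableAt.hasFDerivAt
      exact d
    have d2 : HasFDerivAt (fun V : ((Fin p → ℂ) × ℂ) => l V.2)
        ((fderiv ℂ l (Kinv W).2).comp (ContinuousLinearMap.snd ℂ (Fin p → ℂ) ℂ)) (Kinv W) := by
      have d := h2.differentiableAt.hasFDerivAt.comp (Kinv W)
        (hasFDerivAt_snd (p := Kinv W) (E := Fin p → ℂ) (F := ℂ))
      exact d
    have duniq := d1.unique d2
    have key : (fderiv ℂ K (Kinv W) (η (Kinv W))).2 = fderiv ℂ l (Kinv W).2 ((η (Kinv W)).2) := by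
      have h5 := congrFun (congrArg DFunLike.coe duniq) (η (Kinv W))
      simpa using h5
    have key2 : fderiv ℂ l (Kinv W).2 ((η (Kinv W)).2)
        = (η (Kinv W)).2 * deriv l ((Kinv W).2) := by
      rw [← fderiv_apply_one_eq_deriv]
      have h6 := (fderiv ℂ l (Kinv W).2).map_smul ((η (Kinv W)).2) (1 : ℂ)
      simpa [smul_eq_mul] using h6
    have : (η₀ W).2 = (fderiv ℂ K (Kinv W) (η (Kinv W))).2 := rfl
    rw [this, key, key2, h3, mul_comm]
  -- nonvanishing of deriv l near 0
  have hne : ∀ᶠ W in 𝓝 (0 : ((Fin p → ℂ) × ℂ)), deriv l ((Kinv W).2) ≠ 0 :=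
    hmC.eventually (hdlA.continuousAt.eventually_ne hdl0)
  -- conclusion
  refine ⟨η', ⟨hη'A, ξ'', hξ''A, ?_⟩, ?_⟩
  · filter_upwards [main1] with y h1
    have h2 : fderiv ℂ Fm' y (ξ'' y) = g (Fm' y) • fderiv ℂ Fm' y (ξ' y) :=
      (fderiv ℂ Fm' y).map_smul _ _
    rw [h2, h1]
  · filter_upwards [main2, main3, hne] with W h2 h3 h4
    have h5 : (η' W).2 = g W * (η₀ W).2 := rfl
    rw [h5, h2, hgdef]
    have h6 : v ((Kinv W).2) / deriv l ((Kinv W).2) * (deriv l ((Kinv W).2) * (Kinv W).2)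
        = (Kinv W).2 * v ((Kinv W).2) := by
      field_simp
    rw [h6, hmul, h3]
end
end

section
/- Let f = (f_1,…,f_p) : (ℂ^n,0) → (ℂ^p,0) be a map-germ, let x^α be a monomial in the source variables with α a nonzero multi-index, set γ(x) = (0,…,0,x^α) ∈ ℂ^p, and define the one-parameter unfolding F(x,λ) = (f(x) + λ·γ(x), λ). Suppose F is cross-substantial, i.e. F admits a liftable vector field η = (η_1,…,η_p,η_{p+1}) : (ℂ^{p+1},0) → ℂ^{p+1} with last component η_{p+1}(X_1,…,X_p,Λ) = X_p. Then there exist holomorphic vector field germs ξ̃ : (ℂ^n,0) → ℂ^n and η̃ : (ℂ^p,0) → ℂ^p such that f_p(x)·γ(x) = df(x)·ξ̃(x) + η̃(f(x)) for all x near 0 (i.e. f_p·γ belongs to the extended A-tangent space T𝒜_e f = tf(θ_n) + ωf(θ_p)). -/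
/-!
Restrict the lifting identity `dF(x,λ)·ξ(x,λ) = η(F(x,λ))` to the slice `λ = 0`, where
`dF(x,0)·(v,t) = (df(x)·v + t·γ(x), t)`. Writing `ξ = (ξ_x, ξ_λ)` and `η = (η_X, η_{p+1})`,
the `λ`-component says `ξ_λ(x,0) = η_{p+1}(f(x),0) = f_p(x)`, and the remaining components then
read `df(x)·ξ_x(x,0) + f_p(x)·γ(x) = η_X(f(x),0)`.
-/

open Filter Topology

noncomputable section

variable {E F : Type*}

variable [NormedAddCommGroup E] [NormedSpace ℂ E] [NormedAddCommGroup F] [NormedSpace ℂ F]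

/-- `h ∈ T𝒜_e f = tf(θ_n) + ωf(θ_p)`, the extended `𝒜`-tangent space of `f`. -/
def MemExtendedTangentSpace (f : E → F) (h : E → F) : Prop :=
  ∃ (ξ : E → E) (η : F → F), AnalyticAt ℂ ξ 0 ∧ AnalyticAt ℂ η 0 ∧
    ∀ᶠ x in 𝓝 0, h x = fderiv ℂ f x (ξ x) + η (f x)

theorem MemExtendedTangentSpace.congr {f h h' : E → F} (hh : MemExtendedTangentSpace f h)
    (heq : h =ᶠ[𝓝 0] h') : MemExtendedTangentSpace f h' := by
  obtain ⟨ξ, η, hξ, hη, hmem⟩ := hh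
  refine ⟨ξ, η, hξ, hη, ?_⟩
  filter_upwards [hmem, heq] with x hx hx'
  rw [← hx', hx]

def unfolding (f γ : E → F) : E × ℂ → F × ℂ :=
  fun w => (f w.1 + w.2 • γ w.1, w.2)

theorem fderiv_unfolding_apply {f γ : E → F} {x : E} (hf : DifferentiableAt ℂ f x)
    (hγ : DifferentiableAt ℂ γ x) (t : ℂ) (v : E × ℂ) :
    fderiv ℂ (unfolding f γ) (x, t) v =
      (fderiv ℂ f x v.1 + t • fderiv ℂ γ x v.1 + v.2 • γ x, v.2) := by
  have hF : HasFDerivAt (unfolding f γ)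
      (((fderiv ℂ f x).comp (.fst ℂ E ℂ) + (t • (fderiv ℂ γ x).comp (.fst ℂ E ℂ) +
        (ContinuousLinearMap.snd ℂ E ℂ).smulRight (γ x))).prod (.snd ℂ E ℂ)) (x, t) :=
    ((hf.hasFDerivAt.comp (x, t) hasFDerivAt_fst).add
      (hasFDerivAt_snd.smul (hγ.hasFDerivAt.comp (x, t) hasFDerivAt_fst))).prodMk
      hasFDerivAt_snd
  rw [hF.fderiv]
  simp only [ContinuousLinearMap.prod_apply, add_apply, ContinuousLinearMap.coe_comp,
    Function.comp_apply, ContinuousLinearMap.coe_fst', ContinuousLinearMap.coe_snd', smul_apply,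
    ContinuousLinearMap.smulRight_apply, add_assoc]

theorem memExtendedTangentSpace_of_isLiftable_unfolding {f γ : E → F}
    (hf : ∀ᶠ x in 𝓝 0, DifferentiableAt ℂ f x) (hγ : ∀ᶠ x in 𝓝 0, DifferentiableAt ℂ γ x)
    {η : F × ℂ → F × ℂ} (hlift : IsLiftable (unfolding f γ) η) :
    MemExtendedTangentSpace f (fun x => (η (f x, 0)).2 • γ x) := by
  obtain ⟨hη, ξ, hξ, hξη⟩ := hlift
  refine ⟨fun x => -(ξ (x, 0)).1, fun y => (η (y, 0)).1,
    (analyticAt_fst.comp hξ.curry_left).neg, analyticAt_fst.comp hη.curry_left, ?_⟩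
  have hslice : Tendsto (fun x : E => (x, (0 : ℂ))) (𝓝 0) (𝓝 0) :=
    (continuous_id.prodMk continuous_const).tendsto' 0 0 rfl
  filter_upwards [hf, hγ, hslice.eventually hξη] with x hfx hγx hlift_x
  rw [fderiv_unfolding_apply hfx hγx, Prod.ext_iff] at hlift_x
  obtain ⟨hfst, hsnd⟩ := hlift_x
  simp only [unfolding, zero_smul, add_zero] at hfst hsnd
  rw [map_neg, ← hsnd, ← hfst]
  abel

theorem differentiable_single_monomial {n p : ℕ} (α : Fin n → ℕ) (j : Fin p) :
    Differentiable ℂ (fun y : Fin n → ℂ => (Pi.single j (∏ i, y i ^ α i) : Fin p → ℂ)) :=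
  (ContinuousLinearMap.single ℂ (fun _ : Fin p => ℂ) j).differentiable.comp (by fun_prop)

theorem cross_substantial_tangent_general (n p' : ℕ)
    (f : (Fin n → ℂ) → (Fin (p' + 1) → ℂ)) (hf : IsMapGerm f)
    (α : Fin n → ℕ)
    (η : (Fin (p' + 1) → ℂ) × ℂ → (Fin (p' + 1) → ℂ) × ℂ)
    (hlift : IsLiftable (fun w : (Fin n → ℂ) × ℂ =>
        (f w.1 + w.2 • (Pi.single (Fin.last p') (∏ i, w.1 i ^ α i) : Fin (p' + 1) → ℂ), w.2)) η)
    (hlast : ∀ᶠ W in 𝓝 (0 : (Fin (p' + 1) → ℂ) × ℂ), (η W).2 = W.1 (Fin.last p')) :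
    ∃ (ξt : (Fin n → ℂ) → (Fin n → ℂ)) (ηt : (Fin (p' + 1) → ℂ) → (Fin (p' + 1) → ℂ)),
      AnalyticAt ℂ ξt 0 ∧ AnalyticAt ℂ ηt 0 ∧
      ∀ᶠ x in 𝓝 (0 : Fin n → ℂ),
        f x (Fin.last p') • (Pi.single (Fin.last p') (∏ i, x i ^ α i) : Fin (p' + 1) → ℂ) =
          fderiv ℂ f x (ξt x) + ηt (f x) := by
  have hslice : Tendsto (fun x => (f x, (0 : ℂ))) (𝓝 0) (𝓝 0) := by
    simpa [hf.2, ← Prod.mk_zero_zero] using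
      hf.1.continuousAt.tendsto.prodMk_nhds (tendsto_const_nhds (x := (0 : ℂ)))
  refine (memExtendedTangentSpace_of_isLiftable_unfolding
    (hf.1.eventually_analyticAt.mono fun _ hx => hx.differentiableAt)
    (.of_forall fun x => differentiable_single_monomial α _ x) hlift).congr ?_
  filter_upwards [hslice.eventually hlast] with x hx
  rw [hx]

/-- Lemma 6.9 of the paper: with `p = p'+1`, `γ(x) = (0,…,0,x^α)` and
`F(x,λ) = (f(x) + λ·γ(x), λ)`, if `F` is cross-substantial (it admits a liftable vector
field whose last component is `X_p`), then `f_p·γ` belongs to the extended `A`-tangent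
space of `f`: there are holomorphic vector field germs `ξ̃`, `η̃` with
`f_p(x)·γ(x) = df(x)·ξ̃(x) + η̃(f(x))` near `0`. -/
theorem cross_substantial_tangent (n p' : ℕ)
    (f : (Fin n → ℂ) → (Fin (p' + 1) → ℂ)) (hf : IsMapGerm f)
    (α : Fin n → ℕ) (hα : α ≠ 0)
    (η : (Fin (p' + 1) → ℂ) × ℂ → (Fin (p' + 1) → ℂ) × ℂ)
    (hlift : IsLiftable (fun w : (Fin n → ℂ) × ℂ =>
        (f w.1 + w.2 • (Pi.single (Fin.last p') (∏ i, w.1 i ^ α i) : Fin (p' + 1) → ℂ), w.2)) η)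
    (hlast : ∀ᶠ W in 𝓝 (0 : (Fin (p' + 1) → ℂ) × ℂ), (η W).2 = W.1 (Fin.last p')) :
    ∃ (ξt : (Fin n → ℂ) → (Fin n → ℂ)) (ηt : (Fin (p' + 1) → ℂ) → (Fin (p' + 1) → ℂ)),
      AnalyticAt ℂ ξt 0 ∧ AnalyticAt ℂ ηt 0 ∧
      ∀ᶠ x in 𝓝 (0 : Fin n → ℂ),
        f x (Fin.last p') • (Pi.single (Fin.last p') (∏ i, x i ^ α i) : Fin (p' + 1) → ℂ) =
          fderiv ℂ f x (ξt x) + ηt (f x) :=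
  cross_substantial_tangent_general n p' f hf α η hlift hlast
end
end
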